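/- Let $r \geq 1$ and let $E$ be a finite union of axis-parallel cubes of side length $r^{1/2}$ contained in a cube $B_r$ of side length $r$ in the plane. Then there exists a dyadic number $\kappa \in [r^{-1/2}, 1]$ and a subset $E_\kappa \subseteq E$, itself a union of $r^{1/2}$-cubes, with $|E_\kappa| \gtrsim (\log r)^{-1} |E|$, such that: (1) for every $r^{1/2} \times r$ rectangle (tube) $T$ in the plane, $|N_{r^{1/2}}(E_\kappa) \cap T| \lesssim \kappa |T|$; and (2) there is a collection $\mathbb{T}_\kappa$ of $r^{1/2} \times r$ tubes with $\#\mathbb{T}_\kappa \lesssim |N_{r^{1/2}}(E_\kappa)|/(\kappa r^{3/2})$ whose union covers $E_\kappa$. -/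

import Mathlib

open MeasureTheory

noncomputable section

abbrev Plane := EuclideanSpace ℝ (Fin 2)

/-- A `ρ₁ × ρ₂` tube: an isometric image of the axis-parallel `ρ₁ × ρ₂` rectangle. -/
def IsTube (ρ₁ ρ₂ : ℝ) (T : Set Plane) : Prop :=
  ∃ φ : Plane ≃ᵢ Plane, T = φ '' {x : Plane | |x 0| ≤ ρ₁ / 2 ∧ |x 1| ≤ ρ₂ / 2}

/-- The axis-parallel cube with lower-left corner `c` and side length `s`. -/
def Cube (c : Fin 2 → ℝ) (s : ℝ) : Set Plane :=
  {x : Plane | ∀ i, c i ≤ x i ∧ x i ≤ c i + s}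

open Pointwise
open scoped ENNReal

namespace Reg

open scoped Classical

/-- point of the plane with given coordinates -/
def pp (c : Fin 2 → ℝ) : Plane := (WithLp.equiv 2 (Fin 2 → ℝ)).symm c

@[simp] lemma pp_apply (c : Fin 2 → ℝ) (i : Fin 2) : pp c i = c i := rfl

theorem vol_isom (φ : Plane ≃ᵢ Plane) (X : Set Plane) : volume (φ '' X) = volume X := by
  have h : φ '' X = (φ 0) +ᵥ (φ.toRealLinearIsometryEquiv '' X) := by
    ext y
    simp only [Set.mem_image, Set.mem_vadd_set, IsometryEquiv.toRealLinearIsometryEquiv_apply]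
    constructor
    · rintro ⟨x, hx, rfl⟩
      exact ⟨φ x - φ 0, ⟨x, hx, rfl⟩, by simp [vadd_eq_add]⟩
    · rintro ⟨z, ⟨x, hx, rfl⟩, rfl⟩
      exact ⟨x, hx, by simp [vadd_eq_add]⟩
  have h2 : (φ.toRealLinearIsometryEquiv '' X : Set Plane)
      = φ.toRealLinearIsometryEquiv.symm ⁻¹' X := by
    ext y
    constructor
    · rintro ⟨x, hx, rfl⟩; simpa using hx
    · intro hy; exact ⟨_, hy, by simp⟩
  rw [h, measure_vadd, h2,
    (φ.toRealLinearIsometryEquiv.symm.measurePreserving).measure_preimage_emb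
      (φ.toRealLinearIsometryEquiv.symm.toHomeomorph.measurableEmbedding)]

theorem coord_le_dist (x y : Plane) (i : Fin 2) : |x i - y i| ≤ dist x y := by
  rw [EuclideanSpace.dist_eq]
  rw [show |x i - y i| = Real.sqrt ((x i - y i)^2) from (Real.sqrt_sq_eq_abs _).symm]
  apply Real.sqrt_le_sqrt
  have := Finset.single_le_sum (f := fun j => dist (x j) (y j)^2) (fun j _ => sq_nonneg _)
    (Finset.mem_univ i)
  simpa [Real.dist_eq, sq_abs] using this

theorem dist_le_of_coord {x y : Plane} {s : ℝ} (hs : 0 ≤ s) (h : ∀ i, |x i - y i| ≤ s) :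
    dist x y ≤ 2 * s := by
  rw [EuclideanSpace.dist_eq]
  have hb : ∀ j ∈ Finset.univ, dist (x j) (y j)^2 ≤ s^2 := by
    intro j _
    rw [Real.dist_eq]
    exact pow_le_pow_left₀ (abs_nonneg _) (h j) 2
  calc Real.sqrt (∑ j, dist (x j) (y j)^2) ≤ Real.sqrt (∑ _j : Fin 2, s^2) :=
        Real.sqrt_le_sqrt (Finset.sum_le_sum hb)
    _ ≤ Real.sqrt ((2*s)^2) := by
        apply Real.sqrt_le_sqrt; rw [Fin.sum_univ_two]; nlinarith
    _ = 2*s := by rw [Real.sqrt_sq (by linarith)]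

theorem thick_image (φ : Plane ≃ᵢ Plane) (δ : ℝ) (X : Set Plane) :
    Metric.thickening δ (φ '' X) = φ '' Metric.thickening δ X := by
  ext y
  rw [Metric.mem_thickening_iff]
  constructor
  · rintro ⟨z, ⟨x, hx, rfl⟩, hd⟩
    refine ⟨φ.symm y, Metric.mem_thickening_iff.2 ⟨x, hx, ?_⟩, by simp⟩
    have : dist (φ (φ.symm y)) (φ x) < δ := by rwa [φ.apply_symm_apply]
    rwa [φ.dist_eq] at this
  · rintro ⟨w, hw, rfl⟩
    obtain ⟨z, hz, hd⟩ := Metric.mem_thickening_iff.1 hw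
    exact ⟨φ z, ⟨z, hz, rfl⟩, by rwa [φ.dist_eq]⟩

theorem cube_measurable (c : Fin 2 → ℝ) (s : ℝ) : MeasurableSet (Cube c s) := by
  have h : Cube c s =
      (MeasurableEquiv.toLp 2 (Fin 2 → ℝ)).symm ⁻¹' (Set.univ.pi fun i => Set.Icc (c i) (c i + s)) := by
    ext x
    simp only [Cube, Set.mem_preimage, Set.mem_pi, Set.mem_univ, Set.mem_Icc,
      Set.mem_setOf_eq, true_implies]
    rfl
  rw [h]
  exact (MeasurableSet.univ_pi fun i => measurableSet_Icc).preimage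
    (MeasurableEquiv.toLp 2 (Fin 2 → ℝ)).symm.measurable

/-- axis-parallel box -/
def Box (l u : Fin 2 → ℝ) : Set Plane := {x | ∀ i, l i ≤ x i ∧ x i ≤ u i}

theorem cube_eq_box (c : Fin 2 → ℝ) (s : ℝ) : Cube c s = Box c (fun i => c i + s) := rfl

theorem box_measurable (l u : Fin 2 → ℝ) : MeasurableSet (Box l u) := by
  have h : Box l u =
      (MeasurableEquiv.toLp 2 (Fin 2 → ℝ)).symm ⁻¹' (Set.univ.pi fun i => Set.Icc (l i) (u i)) := by
    ext x
    simp only [Box, Set.mem_preimage, Set.mem_pi, Set.mem_univ, Set.mem_Icc,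
      Set.mem_setOf_eq, true_implies]
    rfl
  rw [h]
  exact (MeasurableSet.univ_pi fun i => measurableSet_Icc).preimage
    (MeasurableEquiv.toLp 2 (Fin 2 → ℝ)).symm.measurable

theorem vol_box (l u : Fin 2 → ℝ) :
    volume (Box l u) = ENNReal.ofReal (u 0 - l 0) * ENNReal.ofReal (u 1 - l 1) := by
  have h : Box l u =
      (MeasurableEquiv.toLp 2 (Fin 2 → ℝ)).symm ⁻¹' (Set.univ.pi fun i => Set.Icc (l i) (u i)) := by
    ext x
    simp only [Box, Set.mem_preimage, Set.mem_pi, Set.mem_univ, Set.mem_Icc,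
      Set.mem_setOf_eq, true_implies]
    rfl
  rw [h, (EuclideanSpace.volume_preserving_symm_measurableEquiv_toLp (ι := Fin 2)).measure_preimage
    (by exact (MeasurableSet.univ_pi fun i => measurableSet_Icc).nullMeasurableSet)]
  rw [volume_pi_pi]
  simp [Real.volume_Icc, Fin.prod_univ_two]

theorem vol_cube (c : Fin 2 → ℝ) (s : ℝ) (hs : 0 ≤ s) :
    volume (Cube c s) = ENNReal.ofReal s * ENNReal.ofReal s := by
  rw [cube_eq_box, vol_box]
  norm_num

/-- the model (axis-parallel, centered) box of a tube of dimensions a × b, as a Box -/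
theorem tube_model_eq_box (a b : ℝ) :
    {x : Plane | |x 0| ≤ a / 2 ∧ |x 1| ≤ b / 2} = Box ![-(a/2), -(b/2)] ![a/2, b/2] := by
  ext x
  simp only [Set.mem_setOf_eq, Box, abs_le]
  constructor
  · rintro ⟨⟨h1, h2⟩, h3, h4⟩ i
    fin_cases i <;> simp_all [Matrix.cons_val_zero, Matrix.cons_val_one]
  · intro h
    have h0 := h 0
    have h1 := h 1
    simp [Matrix.cons_val_zero, Matrix.cons_val_one] at h0 h1
    exact ⟨⟨h0.1, h0.2⟩, h1.1, h1.2⟩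

theorem vol_tube {a b : ℝ} (ha : 0 ≤ a) (hb : 0 ≤ b) {T : Set Plane} (hT : IsTube a b T) :
    volume T = ENNReal.ofReal a * ENNReal.ofReal b := by
  obtain ⟨φ, rfl⟩ := hT
  rw [vol_isom, tube_model_eq_box, vol_box]
  norm_num

section Fixed

variable {r : ℝ}

/-- cube b is within distance ~2√r of tube T -/
def near (r : ℝ) (T : Set Plane) (b : Fin 2 → ℝ) : Prop :=
  (Cube b (Real.sqrt r) ∩ Metric.thickening (2 * Real.sqrt r) T).Nonempty

/-- the members of S whose cube is near T -/
def Nbr (r : ℝ) (T : Set Plane) (S : Finset (Fin 2 → ℝ)) : Finset (Fin 2 → ℝ) :=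
  S.filter (near r T)

/-- corner-separation -/
def Sep (r : ℝ) (b b' : Fin 2 → ℝ) : Prop := ∃ i, Real.sqrt r < |b i - b' i|

theorem Sep.symm {b b' : Fin 2 → ℝ} (h : Sep r b b') : Sep r b' b := by
  obtain ⟨i, hi⟩ := h; exact ⟨i, by rwa [abs_sub_comm]⟩

theorem sep_disjoint {b b' : Fin 2 → ℝ} (h : Sep r b b') :
    Disjoint (Cube b (Real.sqrt r)) (Cube b' (Real.sqrt r)) := by
  obtain ⟨i, hi⟩ := h
  rw [Set.disjoint_left]
  intro x hx hx'
  have h1 := hx i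
  have h2 := hx' i
  have : |b i - b' i| ≤ Real.sqrt r := by
    rw [abs_le]; constructor <;> linarith
  linarith
variable (hr : 1 ≤ r)
include hr

theorem hr0 : (0:ℝ) < r := lt_of_lt_of_le one_pos hr
theorem hρ1 : 1 ≤ Real.sqrt r := by
  rw [show (1:ℝ) = Real.sqrt 1 from (Real.sqrt_one).symm]; exact Real.sqrt_le_sqrt hr
theorem hρ0 : 0 < Real.sqrt r := lt_of_lt_of_le one_pos (hρ1 hr)
theorem hρr : Real.sqrt r ≤ r := by
  nlinarith [Real.sq_sqrt (le_of_lt (hr0 hr)), hρ1 hr, Real.sqrt_nonneg r]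
theorem hρsq : Real.sqrt r * Real.sqrt r = r := Real.mul_self_sqrt (le_of_lt (hr0 hr))

/-- volume of a disjoint union of cubes -/
theorem vol_biUnion {S : Finset (Fin 2 → ℝ)}
    (hsep : ∀ b ∈ S, ∀ b' ∈ S, b ≠ b' → Sep r b b') :
    volume (⋃ b ∈ S, Cube b (Real.sqrt r)) = (S.card : ℝ≥0∞) * ENNReal.ofReal r := by
  rw [measure_biUnion_finset (fun b hb b' hb' hne => sep_disjoint (hsep b hb b' hb' hne))
    (fun b _ => cube_measurable b _)]
  rw [Finset.sum_congr rfl (fun b _ => vol_cube b _ (Real.sqrt_nonneg r))]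
  rw [Finset.sum_const, ← ENNReal.ofReal_mul (Real.sqrt_nonneg r), hρsq hr, nsmul_eq_mul]

/-- counting disjoint cubes inside a region -/
theorem count_cubes {S : Finset (Fin 2 → ℝ)} {R : Set Plane}
    (hsep : ∀ b ∈ S, ∀ b' ∈ S, b ≠ b' → Sep r b b')
    (hsub : ∀ b ∈ S, Cube b (Real.sqrt r) ⊆ R) {V : ℝ} (hV0 : 0 ≤ V)
    (hV : volume R ≤ ENNReal.ofReal V) : (S.card : ℝ) * r ≤ V := by
  have h1 : volume (⋃ b ∈ S, Cube b (Real.sqrt r)) ≤ volume R :=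
    measure_mono (Set.iUnion₂_subset hsub)
  rw [vol_biUnion hr hsep] at h1
  have h2 : ENNReal.ofReal ((S.card : ℝ) * r) ≤ ENNReal.ofReal V := by
    calc ENNReal.ofReal ((S.card : ℝ) * r) = (S.card : ℝ≥0∞) * ENNReal.ofReal r := by
          rw [ENNReal.ofReal_mul (by positivity)]
          congr 1
          exact ENNReal.ofReal_natCast _
      _ ≤ ENNReal.ofReal V := le_trans h1 hV
  exact (ENNReal.ofReal_le_ofReal_iff hV0).1 h2

/-- the model tube box -/
def Model (r : ℝ) : Set Plane := {x : Plane | |x 0| ≤ Real.sqrt r / 2 ∧ |x 1| ≤ r / 2}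

omit hr in
theorem isTube_model_image (φ : Plane ≃ᵢ Plane) : IsTube (Real.sqrt r) r (φ '' Model r) :=
  ⟨φ, rfl⟩

/-- the large box: 9√r × 9r -/
def Box9 (r : ℝ) : Set Plane := {x : Plane | |x 0| ≤ 9 * Real.sqrt r / 2 ∧ |x 1| ≤ 9 * r / 2}

omit hr in
theorem vol_box9 : volume (Box9 r) = ENNReal.ofReal (81 * (Real.sqrt r * r)) := by
  have h : Box9 r = Box ![-(9 * Real.sqrt r / 2), -(9 * r / 2)]
      ![9 * Real.sqrt r / 2, 9 * r / 2] := by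
    ext x
    simp only [Box9, Box, Set.mem_setOf_eq, abs_le, Fin.forall_fin_two]
    simp [Matrix.cons_val_zero, Matrix.cons_val_one, Matrix.head_cons]
  rw [h, vol_box]
  simp only [Matrix.cons_val_zero, Matrix.cons_val_one, Matrix.head_cons]
  rw [show 9 * Real.sqrt r / 2 - -(9 * Real.sqrt r / 2) = 9 * Real.sqrt r by ring]
  rw [show 9 * r / 2 - -(9 * r / 2) = 9 * r by ring]
  rw [← ENNReal.ofReal_mul (by positivity : (0:ℝ) ≤ 9 * Real.sqrt r)]
  congr 1
  ring

theorem mem_cube_self (b : Fin 2 → ℝ) {s : ℝ} (hs : 0 ≤ s) : pp b ∈ Cube b s := by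
  intro i
  simp only [pp_apply]
  constructor <;> linarith

/-- every cube has a tube through it -/
theorem exists_tube_self (b : Fin 2 → ℝ) :
    ∃ T : Set Plane, IsTube (Real.sqrt r) r T ∧ Cube b (Real.sqrt r) ⊆ T ∧ near r T b := by
  set v : Plane := pp ![b 0 + Real.sqrt r / 2, b 1 + r / 2] with hv
  have hsub : Cube b (Real.sqrt r) ⊆ (IsometryEquiv.addRight v) '' Model r := by
    intro x hx
    have h0 := hx 0
    have h1 := hx 1
    refine ⟨x - v, ⟨?_, ?_⟩, sub_add_cancel x v⟩
    · show |(x - v) 0| ≤ _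
      have : (x - v) 0 = x 0 - (b 0 + Real.sqrt r / 2) := by
        simp [hv, pp, WithLp.equiv]
      rw [this, abs_le]
      constructor <;> linarith
    · show |(x - v) 1| ≤ _
      have : (x - v) 1 = x 1 - (b 1 + r / 2) := by
        simp [hv, pp, WithLp.equiv]
      rw [this, abs_le]
      have := hρr hr
      constructor <;> linarith
  refine ⟨(IsometryEquiv.addRight v) '' Model r, ⟨IsometryEquiv.addRight v, rfl⟩, hsub, ?_⟩
  refine ⟨pp b, mem_cube_self hr b (Real.sqrt_nonneg r), Metric.mem_thickening_iff.2
    ⟨pp b, hsub (mem_cube_self hr b (Real.sqrt_nonneg r)), ?_⟩⟩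
  rw [dist_self]
  have := hρ0 hr
  linarith

/-- membership in the thickened cube of a near-tube point forces nearness -/
theorem near_of_thick {T : Set Plane} {b : Fin 2 → ℝ} {x : Plane}
    (hx : x ∈ Metric.thickening (Real.sqrt r) (Cube b (Real.sqrt r))) (hxT : x ∈ T) :
    near r T b := by
  obtain ⟨z, hz, hd⟩ := Metric.mem_thickening_iff.1 hx
  refine ⟨z, hz, Metric.mem_thickening_iff.2 ⟨x, hxT, ?_⟩⟩
  rw [dist_comm] at hd
  have := hρ0 hr
  linarith

/-- the thickened cube is contained in the tripled cube -/
theorem thick_cube_sub (b : Fin 2 → ℝ) :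
    Metric.thickening (Real.sqrt r) (Cube b (Real.sqrt r)) ⊆
      Cube (fun i => b i - Real.sqrt r) (3 * Real.sqrt r) := by
  intro x hx
  obtain ⟨z, hz, hd⟩ := Metric.mem_thickening_iff.1 hx
  intro i
  have h1 := (hz i).1
  have h2 := (hz i).2
  have h3 : |x i - z i| ≤ dist x z := coord_le_dist x z i
  have h4 := abs_le.1 h3
  simp only
  constructor <;> linarith [h4.1, h4.2]

/-- a cube near a tube is inside the image of the big box -/
theorem cube_near_sub_box9 {φ : Plane ≃ᵢ Plane} {b : Fin 2 → ℝ}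
    (hn : near r (φ '' Model r) b) :
    Cube b (Real.sqrt r) ⊆ φ '' Box9 r := by
  obtain ⟨y, hyC, hyT⟩ := hn
  obtain ⟨w, hwT, hdyw⟩ := Metric.mem_thickening_iff.1 hyT
  intro z hz
  have hρ := hρ0 hr
  have hρr' := hρr hr
  -- dist z y ≤ 2√r
  have hdzy : dist z y ≤ 2 * Real.sqrt r := by
    apply dist_le_of_coord (Real.sqrt_nonneg r)
    intro i
    have h1 := (hz i).1
    have h2 := (hz i).2
    have h3 := (hyC i).1
    have h4 := (hyC i).2
    rw [abs_le]
    constructor <;> linarith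
  have hzT : z ∈ Metric.thickening (4 * Real.sqrt r) (φ '' Model r) := by
    refine Metric.mem_thickening_iff.2 ⟨w, hwT, ?_⟩
    calc dist z w ≤ dist z y + dist y w := dist_triangle z y w
      _ < 4 * Real.sqrt r := by linarith
  rw [thick_image] at hzT
  obtain ⟨u, hu, rfl⟩ := hzT
  refine ⟨u, ?_, rfl⟩
  obtain ⟨m, hm, hdum⟩ := Metric.mem_thickening_iff.1 hu
  have hm0 := hm.1
  have hm1 := hm.2
  have c0 : |u 0 - m 0| ≤ dist u m := coord_le_dist u m 0
  have c1 : |u 1 - m 1| ≤ dist u m := coord_le_dist u m 1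
  have a0 := abs_le.1 c0
  have a1 := abs_le.1 c1
  have b0 := abs_le.1 hm0
  have b1 := abs_le.1 hm1
  constructor
  · rw [abs_le]; constructor <;> linarith
  · rw [abs_le]; constructor <;> linarith

/-- the number of separated cubes near a tube is at most 81√r -/
theorem nbr_card_le {S : Finset (Fin 2 → ℝ)}
    (hsep : ∀ b ∈ S, ∀ b' ∈ S, b ≠ b' → Sep r b b')
    {T : Set Plane} (hT : IsTube (Real.sqrt r) r T) :
    ((Nbr r T S).card : ℝ) * r ≤ 81 * (Real.sqrt r * r) := by
  obtain ⟨φ, rfl⟩ := hT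
  apply count_cubes hr (R := φ '' Box9 r)
  · intro b hb b' hb' hne
    exact hsep b (Finset.mem_filter.1 hb).1 b' (Finset.mem_filter.1 hb').1 hne
  · intro b hb
    exact cube_near_sub_box9 hr (Finset.mem_filter.1 hb).2
  · positivity
  · rw [vol_isom, vol_box9]

/-- condition (1) core: the thickened union meets a tube only via near cubes -/
theorem cond1_bound {S : Finset (Fin 2 → ℝ)} {T : Set Plane} {n : ℕ}
    (hn : (Nbr r T S).card ≤ n) :
    volume (Metric.thickening (Real.sqrt r) (⋃ b ∈ S, Cube b (Real.sqrt r)) ∩ T)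
      ≤ (n : ℝ≥0∞) * ENNReal.ofReal (9 * r) := by
  have hsub : Metric.thickening (Real.sqrt r)
        (⋃ b ∈ S, Cube b (Real.sqrt r)) ∩ T ⊆
      ⋃ b ∈ Nbr r T S, Cube (fun i => b i - Real.sqrt r) (3 * Real.sqrt r) := by
    rintro x ⟨hx1, hx2⟩
    simp only [Metric.thickening_iUnion] at hx1
    simp only [Set.mem_iUnion] at hx1
    obtain ⟨b, hb, hxb⟩ := hx1
    have hnear : near r T b := near_of_thick hr hxb hx2
    refine Set.mem_iUnion₂.2 ⟨b, Finset.mem_filter.2 ⟨hb, hnear⟩, thick_cube_sub hr b hxb⟩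
  calc volume _ ≤ volume (⋃ b ∈ Nbr r T S, Cube (fun i => b i - Real.sqrt r) (3 * Real.sqrt r)) :=
        measure_mono hsub
    _ ≤ ∑ _b ∈ Nbr r T S, ENNReal.ofReal (9 * r) := by
        refine le_trans (measure_biUnion_finset_le _ _) (Finset.sum_le_sum fun b _ => ?_)
        rw [vol_cube _ _ (by positivity)]
        rw [← ENNReal.ofReal_mul (by positivity)]
        apply le_of_eq
        congr 1
        have := hρsq hr
        nlinarith
    _ ≤ (n : ℝ≥0∞) * ENNReal.ofReal (9 * r) := by
        rw [Finset.sum_const, nsmul_eq_mul]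
        exact mul_le_mul_left (by exact_mod_cast hn) _

omit hr in
theorem exists_block {y s : ℝ} (hs : 0 < s) (h0 : 0 ≤ y) (h9 : y ≤ 9 * s) :
    ∃ i : ℕ, i < 9 ∧ (i : ℝ) * s ≤ y ∧ y ≤ ((i : ℝ) + 1) * s := by
  by_cases h : (8 : ℝ) * s ≤ y
  · exact ⟨8, by norm_num, by push_cast; linarith, by push_cast; linarith⟩
  · refine ⟨⌊y / s⌋₊, ?_, ?_, ?_⟩
    · have : y / s < 8 := by rw [div_lt_iff₀ hs]; linarith
      have h2 : (⌊y / s⌋₊ : ℝ) ≤ y / s := Nat.floor_le (by positivity)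
      by_contra hc
      push_neg at hc
      have : (9:ℝ) ≤ (⌊y / s⌋₊ : ℝ) := by exact_mod_cast hc
      linarith
    · have h2 : (⌊y / s⌋₊ : ℝ) ≤ y / s := Nat.floor_le (by positivity)
      calc (⌊y / s⌋₊ : ℝ) * s ≤ (y / s) * s := by nlinarith
        _ = y := by field_simp
    · have h2 : y / s < (⌊y / s⌋₊ : ℝ) + 1 := Nat.lt_floor_add_one _
      calc y = (y / s) * s := by field_simp
        _ ≤ ((⌊y / s⌋₊ : ℝ) + 1) * s := by nlinarith

/-- center of the (i,j) block of the big box -/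
def blockv (r : ℝ) (i j : ℕ) : Plane :=
  pp ![(i : ℝ) * Real.sqrt r - 9 * Real.sqrt r / 2 + Real.sqrt r / 2,
       (j : ℝ) * r - 9 * r / 2 + r / 2]

theorem box9_cover :
    Box9 r ⊆ ⋃ i ∈ Finset.range 9, ⋃ j ∈ Finset.range 9,
      (IsometryEquiv.addRight (blockv r i j)) '' Model r := by
  intro x hx
  have hρ := hρ0 hr
  have hrr := hr0 hr
  obtain ⟨hx0, hx1⟩ := hx
  have a0 := abs_le.1 hx0
  have a1 := abs_le.1 hx1
  obtain ⟨i, hi9, hi1, hi2⟩ := exists_block hρ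
    (by linarith [a0.1] : (0:ℝ) ≤ x 0 + 9 * Real.sqrt r / 2)
    (by linarith [a0.2] : x 0 + 9 * Real.sqrt r / 2 ≤ 9 * Real.sqrt r)
  obtain ⟨j, hj9, hj1, hj2⟩ := exists_block hrr
    (by linarith [a1.1] : (0:ℝ) ≤ x 1 + 9 * r / 2)
    (by linarith [a1.2] : x 1 + 9 * r / 2 ≤ 9 * r)
  refine Set.mem_iUnion₂.2 ⟨i, Finset.mem_range.2 hi9, Set.mem_iUnion₂.2
    ⟨j, Finset.mem_range.2 hj9, ⟨x - blockv r i j, ⟨?_, ?_⟩, sub_add_cancel x (blockv r i j)⟩⟩⟩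
  · show |(x - blockv r i j) 0| ≤ _
    have he : (x - blockv r i j) 0
        = x 0 - ((i : ℝ) * Real.sqrt r - 9 * Real.sqrt r / 2 + Real.sqrt r / 2) := by
      simp [blockv, pp, WithLp.equiv]
    rw [he, abs_le]
    constructor <;> linarith
  · show |(x - blockv r i j) 1| ≤ _
    have he : (x - blockv r i j) 1 = x 1 - ((j : ℝ) * r - 9 * r / 2 + r / 2) := by
      simp [blockv, pp, WithLp.equiv]
    rw [he, abs_le]
    constructor <;> linarith

/-- the image of the big box is covered by 81 tubes -/
theorem cover_by_81 (φ : Plane ≃ᵢ Plane) :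
    ∃ 𝕋 : Finset (Set Plane), 𝕋.card ≤ 81 ∧ (∀ T ∈ 𝕋, IsTube (Real.sqrt r) r T) ∧
      φ '' Box9 r ⊆ ⋃ T ∈ 𝕋, T := by
  refine ⟨(Finset.range 9 ×ˢ Finset.range 9).image
    (fun p => φ '' ((IsometryEquiv.addRight (blockv r p.1 p.2)) '' Model r)), ?_, ?_, ?_⟩
  · calc _ ≤ (Finset.range 9 ×ˢ Finset.range 9).card := Finset.card_image_le
      _ = 81 := by simp
  · intro T hT
    obtain ⟨p, _, rfl⟩ := Finset.mem_image.1 hT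
    rw [← Set.image_comp]
    exact ⟨(IsometryEquiv.addRight (blockv r p.1 p.2)).trans φ, rfl⟩
  · rintro x ⟨u, hu, rfl⟩
    obtain ⟨i, hi, hrest⟩ := Set.mem_iUnion₂.1 (box9_cover hr hu)
    obtain ⟨j, hj, hm⟩ := Set.mem_iUnion₂.1 hrest
    refine Set.mem_iUnion₂.2 ⟨φ '' ((IsometryEquiv.addRight (blockv r i j)) '' Model r),
      Finset.mem_image.2 ⟨(i, j), Finset.mem_product.2 ⟨hi, hj⟩, rfl⟩, ⟨_, hm, rfl⟩⟩

omit hr in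
theorem nbr_mono {S S' : Finset (Fin 2 → ℝ)} (h : S ⊆ S') (T : Set Plane) :
    Nbr r T S ⊆ Nbr r T S' := Finset.filter_subset_filter _ h

/-- pruning: extract a separated subfamily whose tripled cubes cover everything -/
theorem prune : ∀ (n : ℕ) (A : Finset (Fin 2 → ℝ)), A.card ≤ n →
    ∃ B ⊆ A, (∀ b ∈ B, ∀ b' ∈ B, b ≠ b' → Sep r b b') ∧
      (∀ c ∈ A, ∃ b ∈ B, ∀ i, |c i - b i| ≤ Real.sqrt r) := by
  intro n
  induction n with
  | zero =>
    intro A hA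
    rw [Nat.le_zero, Finset.card_eq_zero] at hA
    subst hA
    exact ⟨∅, Finset.Subset.refl _, by simp, by simp⟩
  | succ n ih =>
    intro A hA
    by_cases hne : A.Nonempty
    · obtain ⟨a, ha⟩ := hne
      set A' := A.filter (fun c => Sep r c a) with hA'
      have haA' : a ∉ A' := by
        intro hmem
        obtain ⟨i, hi⟩ := (Finset.mem_filter.1 hmem).2
        simp at hi
        have := hρ0 hr
        linarith
      have hcard : A'.card ≤ n := by
        have h1 : A' ⊆ A := Finset.filter_subset _ _
        have h2 : A' ⊂ A := Finset.ssubset_iff_of_subset h1 |>.2 ⟨a, ha, haA'⟩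
        have := Finset.card_lt_card h2
        omega
      obtain ⟨B', hB'A, hsep, hcov⟩ := ih A' hcard
      refine ⟨insert a B', ?_, ?_, ?_⟩
      · intro b hb
        rcases Finset.mem_insert.1 hb with rfl | hb
        · exact ha
        · exact (Finset.filter_subset _ _) (hB'A hb)
      · intro b hb b' hb' hne'
        rcases Finset.mem_insert.1 hb with hba | hbB <;>
          rcases Finset.mem_insert.1 hb' with hba' | hbB'
        · exact absurd (hba.trans hba'.symm) hne'
        · subst hba
          exact Sep.symm ((Finset.mem_filter.1 (hB'A hbB')).2)
        · subst hba'
          exact (Finset.mem_filter.1 (hB'A hbB)).2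
        · exact hsep b hbB b' hbB' hne'
      · intro c hc
        by_cases hcs : Sep r c a
        · obtain ⟨b, hb, hball⟩ := hcov c (Finset.mem_filter.2 ⟨hc, hcs⟩)
          exact ⟨b, Finset.mem_insert_of_mem hb, hball⟩
        · refine ⟨a, Finset.mem_insert_self _ _, ?_⟩
          intro i
          by_contra hcon
          push_neg at hcon
          exact hcs ⟨i, hcon⟩
    · rw [Finset.not_nonempty_iff_eq_empty] at hne
      subst hne
      exact ⟨∅, Finset.Subset.refl _, by simp, by simp⟩

/-- union of the groups of a list -/
def U (L : List (Finset (Fin 2 → ℝ) × Set Plane)) : Finset (Fin 2 → ℝ) :=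
  L.foldr (fun p s => p.1 ∪ s) ∅

omit hr in
@[simp] theorem U_nil : U ([] : List (Finset (Fin 2 → ℝ) × Set Plane)) = ∅ := rfl
omit hr in
@[simp] theorem U_cons (p : Finset (Fin 2 → ℝ) × Set Plane) (L) : U (p :: L) = p.1 ∪ U L := rfl

omit hr in
theorem subset_U {p} : ∀ {L : List (Finset (Fin 2 → ℝ) × Set Plane)}, p ∈ L → p.1 ⊆ U L := by
  intro L
  induction L with
  | nil => intro h; exact absurd h List.not_mem_nil
  | cons q L ih =>
    intro h
    rcases List.mem_cons.1 h with rfl | h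
    · exact Finset.subset_union_left
    · exact (ih h).trans Finset.subset_union_right

omit hr in
theorem U_filter_subset (f : Finset (Fin 2 → ℝ) × Set Plane → Bool) :
    ∀ (L : List (Finset (Fin 2 → ℝ) × Set Plane)), U (L.filter f) ⊆ U L := by
  intro L
  induction L with
  | nil => simp
  | cons q L ih =>
    by_cases h : f q
    · rw [List.filter_cons_of_pos h]
      exact Finset.union_subset_union (Finset.Subset.refl _) ih
    · rw [List.filter_cons_of_neg (by simpa using h)]
      exact ih.trans Finset.subset_union_right

omit hr in
theorem U_filter_mono (f g : Finset (Fin 2 → ℝ) × Set Plane → Bool)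
    (hfg : ∀ p, f p = true → g p = true) :
    ∀ (L : List (Finset (Fin 2 → ℝ) × Set Plane)), U (L.filter f) ⊆ U (L.filter g) := by
  intro L
  induction L with
  | nil => simp
  | cons q L ih =>
    by_cases h : f q
    · rw [List.filter_cons_of_pos h, List.filter_cons_of_pos (hfg q h)]
      exact Finset.union_subset_union (Finset.Subset.refl _) ih
    · rw [List.filter_cons_of_neg (by simpa using h)]
      by_cases h2 : g q
      · rw [List.filter_cons_of_pos h2]
        exact ih.trans Finset.subset_union_right
      · rw [List.filter_cons_of_neg (by simpa using h2)]
        exact ih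

omit hr in
theorem disjoint_U {s : Finset (Fin 2 → ℝ)} :
    ∀ {L : List (Finset (Fin 2 → ℝ) × Set Plane)}, (∀ q ∈ L, Disjoint s q.1) →
      Disjoint s (U L) := by
  intro L
  induction L with
  | nil => intro _; exact Finset.disjoint_empty_right s
  | cons q L ih =>
    intro h
    rw [U_cons, Finset.disjoint_union_right]
    exact ⟨h q (List.mem_cons_self), ih (fun q' hq' => h q' (List.mem_cons_of_mem _ hq'))⟩

omit hr in
theorem U_card : ∀ {L : List (Finset (Fin 2 → ℝ) × Set Plane)},
    List.Pairwise (fun p q => Disjoint p.1 q.1) L →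
    (U L).card = (L.map (fun p => p.1.card)).sum := by
  intro L
  induction L with
  | nil => intro _; simp [U_nil]
  | cons q L ih =>
    intro h
    rcases List.pairwise_cons.1 h with ⟨h1, h2⟩
    rw [U_cons, Finset.card_union_of_disjoint (disjoint_U (fun p hp => h1 p hp)), List.map_cons,
      List.sum_cons, ih h2]

/-- the domination property: each suffix head dominates tube counts of the suffix union -/
def Dom (r : ℝ) : List (Finset (Fin 2 → ℝ) × Set Plane) → Prop
  | [] => True
  | p :: L => (∀ T, IsTube (Real.sqrt r) r T → (Nbr r T (U (p :: L))).card ≤ p.1.card) ∧ Dom r L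

/-- the greedy tube decomposition -/
theorem greedy : ∀ (n : ℕ) (S : Finset (Fin 2 → ℝ)), S.card ≤ n →
    ∃ L, U L = S ∧ Dom r L ∧ List.Pairwise (fun p q => Disjoint p.1 q.1) L ∧
      (∀ p ∈ L, p.1.Nonempty ∧ IsTube (Real.sqrt r) r p.2 ∧ ∀ b ∈ p.1, near r p.2 b) := by
  intro n
  induction n with
  | zero =>
    intro S hS
    rw [Nat.le_zero, Finset.card_eq_zero] at hS
    subst hS
    exact ⟨[], rfl, trivial, List.Pairwise.nil, by simp⟩
  | succ n ih =>
    intro S hS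
    by_cases hne : S.Nonempty
    · obtain ⟨b₀, hb₀⟩ := hne
      obtain ⟨T₀, hT₀, _, hnear₀⟩ := exists_tube_self hr b₀
      set Vals : Set ℕ := {k | ∃ T, IsTube (Real.sqrt r) r T ∧ (Nbr r T S).card = k} with hVals
      have hne' : Vals.Nonempty := ⟨_, T₀, hT₀, rfl⟩
      have hbdd : BddAbove Vals := by
        refine ⟨S.card, ?_⟩
        rintro k ⟨T, _, rfl⟩
        exact Finset.card_le_card (Finset.filter_subset _ _)
      obtain ⟨T', hT', hcard'⟩ := Nat.sSup_mem hne' hbdd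
      set g := Nbr r T' S with hg
      have hgS : g ⊆ S := Finset.filter_subset _ _
      have hg1 : 1 ≤ g.card := by
        rw [hcard']
        calc 1 ≤ (Nbr r T₀ S).card :=
              Finset.card_pos.2 ⟨b₀, Finset.mem_filter.2 ⟨hb₀, hnear₀⟩⟩
          _ ≤ sSup Vals := le_csSup hbdd ⟨T₀, hT₀, rfl⟩
      have hssub : S \ g ⊂ S := by
        refine Finset.sdiff_ssubset ?_ ?_
        · exact hgS
        · exact Finset.card_pos.1 hg1
      have hcard2 : (S \ g).card ≤ n := by
        have := Finset.card_lt_card hssub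
        omega
      obtain ⟨L', hUL', hDom', hpw', hprops'⟩ := ih (S \ g) hcard2
      refine ⟨(g, T') :: L', ?_, ?_, ?_, ?_⟩
      · rw [U_cons, hUL']
        exact Finset.union_sdiff_of_subset hgS
      · constructor
        · intro T hT
          have hU : U ((g, T') :: L') = S := by
            rw [U_cons, hUL']; exact Finset.union_sdiff_of_subset hgS
          rw [hU, hg, hcard']
          exact le_csSup hbdd ⟨T, hT, rfl⟩
        · exact hDom'
      · refine List.Pairwise.cons ?_ hpw'
        intro q hq
        have hsub2 : q.1 ⊆ S \ g := hUL' ▸ subset_U hq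
        exact (Finset.sdiff_disjoint.mono_left hsub2).symm

      · intro p hp
        rcases List.mem_cons.1 hp with rfl | hp
        · exact ⟨Finset.card_pos.1 hg1, hT', fun b hb => (Finset.mem_filter.1 hb).2⟩
        · exact hprops' p hp
    · rw [Finset.not_nonempty_iff_eq_empty] at hne
      subst hne
      exact ⟨[], rfl, trivial, List.Pairwise.nil, by simp⟩

omit hr in
/-- low-count groups in a dominated list have small tube counts -/
theorem select : ∀ (L : List (Finset (Fin 2 → ℝ) × Set Plane)), Dom r L → ∀ (t : ℕ), 1 ≤ t →
    ∀ (T : Set Plane), IsTube (Real.sqrt r) r T →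
      (Nbr r T (U (L.filter (fun p => decide (p.1.card < t))))).card < t := by
  intro L
  induction L with
  | nil =>
    intro _ t ht T _
    simpa [Nbr] using Nat.lt_of_lt_of_le Nat.zero_lt_one ht
  | cons p L ih =>
    intro hdom t ht T hT
    by_cases h : p.1.card < t
    · rw [List.filter_cons_of_pos (by simpa using h)]
      have hsub : U (p :: L.filter (fun p => decide (p.1.card < t))) ⊆ U (p :: L) := by
        rw [U_cons, U_cons]
        exact Finset.union_subset_union (Finset.Subset.refl _) (U_filter_subset _ L)
      calc (Nbr r T (U (p :: L.filter (fun p => decide (p.1.card < t))))).card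
          ≤ (Nbr r T (U (p :: L))).card := Finset.card_le_card (nbr_mono hsub T)
        _ ≤ p.1.card := hdom.1 T hT
        _ < t := h
    · rw [List.filter_cons_of_neg (by simpa using h)]
      exact ih hdom.2 t ht T hT

omit hr in
/-- a list's mapped sum splits by fibers of a level function -/
theorem sum_levels {α : Type*} (f lv : α → ℕ) :
    ∀ (L : List α) (n : ℕ), (∀ p ∈ L, lv p < n) →
      ∑ k ∈ Finset.range n, ((L.filter (fun p => decide (lv p = k))).map f).sum
        = (L.map f).sum := by
  intro L
  induction L with
  | nil => intro n _; simp
  | cons p L ih =>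
    intro n hlt
    have hn : lv p < n := hlt p (List.mem_cons_self)
    have He : ∀ k, ((List.filter (fun p => decide (lv p = k)) (p :: L)).map f).sum
        = (if lv p = k then f p else 0)
          + ((List.filter (fun p => decide (lv p = k)) L).map f).sum := by
      intro k
      by_cases h : lv p = k
      · rw [List.filter_cons_of_pos (by simpa using h), if_pos h, List.map_cons, List.sum_cons]
      · rw [List.filter_cons_of_neg (by simpa using h), if_neg h, Nat.zero_add]
    rw [Finset.sum_congr rfl (fun k _ => He k), Finset.sum_add_distrib,
      ih n (fun q hq => hlt q (List.mem_cons_of_mem _ hq)), Finset.sum_ite_eq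
        (Finset.range n) (lv p) (fun _ => f p), if_pos (Finset.mem_range.2 hn)]
    simp

omit hr in
theorem mem_U_exists {b : Fin 2 → ℝ} :
    ∀ {L : List (Finset (Fin 2 → ℝ) × Set Plane)}, b ∈ U L → ∃ p ∈ L, b ∈ p.1 := by
  intro L
  induction L with
  | nil => intro h; simp [U_nil] at h
  | cons q L ih =>
    intro h
    rcases Finset.mem_union.1 h with h | h
    · exact ⟨q, List.mem_cons_self, h⟩
    · obtain ⟨p, hp, hbp⟩ := ih h
      exact ⟨p, List.mem_cons_of_mem _ hp, hbp⟩

omit hr in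
theorem le_sum_of_forall_le {α : Type*} (f : α → ℕ) (m : ℕ) :
    ∀ (L : List α), (∀ p ∈ L, m ≤ f p) → L.length * m ≤ (L.map f).sum := by
  intro L
  induction L with
  | nil => intro _; simp
  | cons p L ih =>
    intro h
    rw [List.length_cons, List.map_cons, List.sum_cons, Nat.succ_mul, Nat.add_comm]
    exact Nat.add_le_add (h p (List.mem_cons_self))
      (ih (fun q hq => h q (List.mem_cons_of_mem _ hq)))

theorem thick_cube_sub_gen (c : Fin 2 → ℝ) (s : ℝ) :
    Metric.thickening (Real.sqrt r) (Cube c s) ⊆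
      Cube (fun i => c i - Real.sqrt r) (s + 2 * Real.sqrt r) := by
  intro x hx
  obtain ⟨z, hz, hd⟩ := Metric.mem_thickening_iff.1 hx
  intro i
  have h1 := (hz i).1
  have h2 := (hz i).2
  have h3 := abs_le.1 (coord_le_dist x z i)
  simp only
  constructor <;> linarith [h3.1, h3.2]

/-- covering the groups of a list by tubes, 81 each -/
theorem cover_groups : ∀ (Lk : List (Finset (Fin 2 → ℝ) × Set Plane)),
    (∀ p ∈ Lk, IsTube (Real.sqrt r) r p.2 ∧ ∀ b ∈ p.1, near r p.2 b) →
    ∃ 𝕋 : Finset (Set Plane), (∀ T ∈ 𝕋, IsTube (Real.sqrt r) r T) ∧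
      𝕋.card ≤ 81 * Lk.length ∧
      ∀ p ∈ Lk, ∀ b ∈ p.1, Cube b (Real.sqrt r) ⊆ ⋃ T ∈ 𝕋, (T : Set Plane) := by
  intro Lk
  induction Lk with
  | nil => intro _; exact ⟨∅, by simp, by simp, by simp⟩
  | cons p Lk ih =>
    intro h
    obtain ⟨hpT, hpnear⟩ := h p (List.mem_cons_self)
    obtain ⟨φ, hφ⟩ := hpT
    obtain ⟨𝕋p, hcard, htubes, hcov⟩ := cover_by_81 hr φ
    obtain ⟨𝕋', htubes', hcard', hcov'⟩ := ih (fun q hq => h q (List.mem_cons_of_mem _ hq))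
    refine ⟨𝕋p ∪ 𝕋', ?_, ?_, ?_⟩
    · intro T hT
      rcases Finset.mem_union.1 hT with hT | hT
      · exact htubes T hT
      · exact htubes' T hT
    · calc (𝕋p ∪ 𝕋').card ≤ 𝕋p.card + 𝕋'.card := Finset.card_union_le _ _
        _ ≤ 81 * (p :: Lk).length := by
          rw [List.length_cons]
          omega
    · intro q hq b hb
      have hbig : ∀ 𝕊 : Finset (Set Plane), 𝕊 ⊆ 𝕋p ∪ 𝕋' →
          (⋃ T ∈ 𝕊, (T : Set Plane)) ⊆ ⋃ T ∈ 𝕋p ∪ 𝕋', (T : Set Plane) := by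
        intro 𝕊 h𝕊
        exact Set.iUnion₂_subset fun T hT => Set.subset_iUnion₂ (s := fun T _ => T) T (h𝕊 hT)
      rcases List.mem_cons.1 hq with rfl | hq
      · have hsub : Cube b (Real.sqrt r) ⊆ φ '' Box9 r := by
          apply cube_near_sub_box9 hr
          have hn := hpnear b hb
          rw [hφ] at hn
          exact hn
        exact (hsub.trans hcov).trans (hbig 𝕋p Finset.subset_union_left)
      · exact ((hcov' q hq b hb)).trans (hbig 𝕋' Finset.subset_union_right)

end Fixed
end Reg

set_option maxHeartbeats 2000000 in
open Reg in
/-- Single-scale regularization: a union `E` of `√r`-cubes in a cube of side `r` has a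
subset `E_κ` (a union of some of the same cubes) of measure `≳ (log r)⁻¹ |E|` which is
`κ`-regular for some dyadic `κ ∈ [r^{-1/2}, 1]`: every `√r × r` tube meets the
`√r`-neighborhood of `E_κ` in measure `≲ κ|T|`, and `E_κ` is covered by
`≲ |N_{√r}(E_κ)|/(κ r^{3/2})` such tubes. -/
theorem stmt_0 :
    ∃ C : ℝ, 0 < C ∧
      ∀ (r : ℝ) (c₀ : Fin 2 → ℝ) (A : Finset (Fin 2 → ℝ)), 1 ≤ r →
        (∀ c ∈ A, Cube c (Real.sqrt r) ⊆ Cube c₀ r) →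
        ∃ (κ : ℝ) (m : ℕ) (A' : Finset (Fin 2 → ℝ)) (Eκ : Set Plane),
          κ = (2 : ℝ) ^ (-(m : ℤ)) ∧ r ^ (-(1 : ℝ) / 2) ≤ κ ∧ κ ≤ 1 ∧
          A' ⊆ A ∧ Eκ = ⋃ c ∈ A', Cube c (Real.sqrt r) ∧
          volume (⋃ c ∈ A, Cube c (Real.sqrt r)) ≤
            ENNReal.ofReal (C * (1 + Real.log r)) * volume Eκ ∧
          (∀ T : Set Plane, IsTube (Real.sqrt r) r T →
            volume (Metric.thickening (Real.sqrt r) Eκ ∩ T) ≤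
              ENNReal.ofReal (C * κ) * volume T) ∧
          ∃ 𝕋 : Finset (Set Plane),
            (∀ T ∈ 𝕋, IsTube (Real.sqrt r) r T) ∧
            Eκ ⊆ ⋃ T ∈ 𝕋, T ∧
            (𝕋.card : ℝ) * (κ * r ^ ((3 : ℝ) / 2)) ≤
              C * (volume (Metric.thickening (Real.sqrt r) Eκ)).toReal := by
  classical
  refine ⟨2000, by norm_num, ?_⟩
  intro r c₀ A hr hA
  have hr0' : (0:ℝ) < r := Reg.hr0 hr
  have hρ0' : (0:ℝ) < Real.sqrt r := Reg.hρ0 hr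
  have hρ1' : (1:ℝ) ≤ Real.sqrt r := Reg.hρ1 hr
  have hlogr : 0 ≤ Real.log r := Real.log_nonneg hr
  by_cases hAne : A.Nonempty
  swap
  · -- empty case
    rw [Finset.not_nonempty_iff_eq_empty] at hAne
    subst hAne
    refine ⟨1, 0, ∅, ∅, by norm_num, ?_, le_refl 1, Finset.empty_subset _, by simp, ?_, ?_, ?_⟩
    · exact Real.rpow_le_one_of_one_le_of_nonpos hr (by norm_num)
    · simp
    · intro T hT
      rw [Metric.thickening_empty, Set.empty_inter]
      simp
    · refine ⟨∅, by simp, by simp, ?_⟩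
      rw [Metric.thickening_empty]
      simp
  -- main case
  obtain ⟨B, hBA, hsep, hcov⟩ := Reg.prune hr A.card A le_rfl
  have hBne : B.Nonempty := by
    obtain ⟨a, ha⟩ := hAne
    obtain ⟨b, hb, -⟩ := hcov a ha
    exact ⟨b, hb⟩
  obtain ⟨L, hUL, hdom, hpw, hprops⟩ := Reg.greedy hr B.card B le_rfl
  set lv : Finset (Fin 2 → ℝ) × Set Plane → ℕ := fun p => Nat.log 2 p.1.card with hlvdef
  -- group size bound
  have hgb : ∀ p ∈ L, (p.1.card : ℝ) ≤ 81 * Real.sqrt r := by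
    intro p hp
    obtain ⟨hne, hTube, hnear⟩ := hprops p hp
    have hsubn : p.1 ⊆ Reg.Nbr r p.2 B := by
      intro b hb
      exact Finset.mem_filter.2 ⟨hUL ▸ Reg.subset_U hp hb, hnear b hb⟩
    have h1 := Reg.nbr_card_le hr hsep hTube
    have h2 : (p.1.card : ℝ) ≤ ((Reg.Nbr r p.2 B).card : ℝ) := by
      exact_mod_cast Finset.card_le_card hsubn
    have h3 : (p.1.card : ℝ) * r ≤ (81 * Real.sqrt r) * r := by nlinarith
    exact le_of_mul_le_mul_right h3 hr0'
  set Kn := Nat.log 2 ⌊81 * Real.sqrt r⌋₊ with hKndef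
  have hlvlt : ∀ p ∈ L, lv p < Kn + 1 := by
    intro p hp
    have h1 : p.1.card ≤ ⌊81 * Real.sqrt r⌋₊ := Nat.le_floor (hgb p hp)
    exact Nat.lt_succ_of_le (Nat.log_mono_right h1)
  set Mk : ℕ → ℕ := fun k =>
    ((L.filter (fun p => decide (lv p = k))).map (fun p => p.1.card)).sum with hMkdef
  have hsum : ∑ k ∈ Finset.range (Kn+1), Mk k = B.card := by
    rw [hMkdef]
    rw [Reg.sum_levels (fun p => p.1.card) lv L (Kn+1) hlvlt]
    rw [← Reg.U_card hpw, hUL]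
  have hpig : ∃ kk ∈ Finset.range (Kn+1), B.card ≤ (Kn+1) * Mk kk := by
    apply Finset.exists_le_of_sum_le ⟨0, Finset.mem_range.2 (Nat.succ_pos _)⟩
    rw [Finset.sum_const, Finset.card_range, smul_eq_mul, ← Finset.mul_sum, hsum]
  obtain ⟨k, hkmem, hpigk⟩ := hpig
  set Lk := L.filter (fun p => decide (lv p = k)) with hLkdef
  set B' := Reg.U Lk with hB'def
  have hpwk : List.Pairwise (fun p q => Disjoint p.1 q.1) Lk :=
    List.Pairwise.sublist (List.filter_sublist) hpw
  have hcardB' : B'.card = Mk k := Reg.U_card hpwk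
  have hB'B : B' ⊆ B := hUL ▸ Reg.U_filter_subset _ L
  have hsepB' : ∀ b ∈ B', ∀ b' ∈ B', b ≠ b' → Reg.Sep r b b' :=
    fun b hb b' hb' hne => hsep b (hB'B hb) b' (hB'B hb') hne
  have hM1 : 1 ≤ B'.card := by
    rw [hcardB']
    have h1 : 1 ≤ B.card := Finset.card_pos.2 hBne
    by_contra hc
    push_neg at hc
    interval_cases h : Mk k
    · omega
  -- there is a group at level k
  have hLkne : Lk ≠ [] := by
    intro hnil
    rw [hcardB', hMkdef] at hM1
    rw [hLkdef] at hnil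
    simp only [hnil] at hM1
    simp at hM1
  have hk81 : ((2:ℝ))^k ≤ 81 * Real.sqrt r := by
    obtain ⟨p, hp⟩ := List.exists_mem_of_ne_nil Lk hLkne
    have hpL : p ∈ L := (List.mem_filter.1 hp).1
    have hlvp : lv p = k := of_decide_eq_true (List.mem_filter.1 hp).2
    have hne0 : p.1.card ≠ 0 := Finset.card_ne_zero_of_mem ((hprops p hpL).1.choose_spec)
    have h1 : 2^k ≤ p.1.card := by
      rw [← hlvp]
      exact Nat.pow_log_le_self 2 hne0
    calc ((2:ℝ))^k ≤ (p.1.card : ℝ) := by exact_mod_cast h1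
      _ ≤ 81 * Real.sqrt r := hgb p hpL
  -- dyadic scale
  set s' := Nat.log 2 ⌊Real.sqrt r⌋₊ with hs'def
  have hfl1 : 1 ≤ ⌊Real.sqrt r⌋₊ := Nat.le_floor (by exact_mod_cast hρ1')
  have h2s : ((2:ℝ))^s' ≤ Real.sqrt r := by
    calc ((2:ℝ))^s' ≤ (⌊Real.sqrt r⌋₊ : ℝ) := by
          exact_mod_cast Nat.pow_log_le_self 2 (by omega)
      _ ≤ Real.sqrt r := Nat.floor_le (Real.sqrt_nonneg r)
  have hs2 : Real.sqrt r < ((2:ℝ))^(s'+1) := by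
    have h1 : ⌊Real.sqrt r⌋₊ + 1 ≤ 2^(s'+1) :=
      Nat.succ_le_of_lt (Nat.lt_pow_succ_log_self one_lt_two _)
    calc Real.sqrt r < ⌊Real.sqrt r⌋₊ + 1 := Nat.lt_floor_add_one _
      _ ≤ ((2:ℝ))^(s'+1) := by exact_mod_cast h1
  set mn := min k s' with hmndef
  set m := s' - mn with hmdef
  set κ := (2:ℝ) ^ (-(m:ℤ)) with hκdef
  have hmmn : mn + m = s' := by omega
  have hκinv : κ = ((2:ℝ)^m)⁻¹ := by
    rw [hκdef, zpow_neg, zpow_natCast]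
  have hκpos : 0 < κ := by rw [hκinv]; positivity
  have hκ2m : κ * (2:ℝ)^m = 1 := by
    rw [hκinv]
    field_simp
  have hκ_eq : κ * (2:ℝ)^s' = (2:ℝ)^mn := by
    rw [← hmmn, pow_add, ← mul_assoc, mul_comm κ ((2:ℝ)^mn), mul_assoc, hκ2m, mul_one]
  have h1le : (1:ℝ) ≤ (2:ℝ)^mn := one_le_pow₀ (by norm_num)
  have hκ1 : κ ≤ 1 := by
    have h1 : (1:ℝ) ≤ (2:ℝ)^m := one_le_pow₀ (by norm_num)
    nlinarith
  have hκρ1 : (2:ℝ)^mn ≤ κ * Real.sqrt r := by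
    calc (2:ℝ)^mn = κ * (2:ℝ)^s' := hκ_eq.symm
      _ ≤ κ * Real.sqrt r := by nlinarith
  have hκρ2 : κ * Real.sqrt r ≤ (2:ℝ)^(k+1) := by
    have hmnk : mn ≤ k := min_le_left _ _
    have h1 : (2:ℝ)^mn ≤ (2:ℝ)^k := pow_le_pow_right₀ (by norm_num) hmnk
    calc κ * Real.sqrt r ≤ κ * (2:ℝ)^(s'+1) := by nlinarith
      _ = κ * (2:ℝ)^s' * 2 := by rw [pow_succ]; ring
      _ = (2:ℝ)^mn * 2 := by rw [hκ_eq]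
      _ ≤ (2:ℝ)^k * 2 := by nlinarith
      _ = (2:ℝ)^(k+1) := by rw [pow_succ]
  have hF1 : (2:ℝ)^k ≤ 81 * (κ * Real.sqrt r) := by
    rcases le_or_gt k s' with h | h
    · have hmk : mn = k := min_eq_left h
      rw [← hmk]
      nlinarith
    · have hmk : mn = s' := min_eq_right (le_of_lt h)
      have hκone : κ = 1 := by
        have h1 := hκ_eq
        rw [hmk] at h1
        have h2 : ((2:ℝ)^s') ≠ 0 := by positivity
        field_simp at h1
        exact h1
      rw [hκone]
      nlinarith
  have hκργ1 : (1:ℝ) ≤ κ * Real.sqrt r := le_trans h1le hκρ1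
  have hκlow : r ^ (-(1:ℝ)/2) ≤ κ := by
    rw [show (-(1:ℝ))/2 = -(1/2) by norm_num, Real.rpow_neg (le_of_lt hr0'),
      ← Real.sqrt_eq_rpow, inv_eq_one_div, div_le_iff₀ hρ0']
    linarith
  -- the distinguished set
  have hA'A : B' ⊆ A := hB'B.trans hBA
  have hvolEκ : volume (⋃ b ∈ B', Cube b (Real.sqrt r))
      = (B'.card : ℝ≥0∞) * ENNReal.ofReal r := Reg.vol_biUnion hr hsepB'
  refine ⟨κ, m, B', ⋃ b ∈ B', Cube b (Real.sqrt r), rfl, hκlow, hκ1, hA'A, rfl, ?_, ?_, ?_⟩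
  · -- measure comparison
    have hEsub : (⋃ c ∈ A, Cube c (Real.sqrt r)) ⊆
        ⋃ b ∈ B, Cube (fun i => b i - Real.sqrt r) (3 * Real.sqrt r) := by
      intro x hx
      obtain ⟨c, hc, hxc⟩ := Set.mem_iUnion₂.1 hx
      obtain ⟨b, hb, hball⟩ := hcov c hc
      refine Set.mem_iUnion₂.2 ⟨b, hb, ?_⟩
      intro i
      have h1 := (hxc i).1
      have h2 := (hxc i).2
      have h3 := abs_le.1 (hball i)
      simp only
      constructor <;> linarith [h3.1, h3.2]
    have hvolE : volume (⋃ c ∈ A, Cube c (Real.sqrt r)) ≤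
        (B.card : ℝ≥0∞) * ENNReal.ofReal (9 * r) := by
      calc volume (⋃ c ∈ A, Cube c (Real.sqrt r))
          ≤ volume (⋃ b ∈ B, Cube (fun i => b i - Real.sqrt r) (3 * Real.sqrt r)) :=
            measure_mono hEsub
        _ ≤ ∑ _b ∈ B, ENNReal.ofReal (9 * r) := by
            refine le_trans (measure_biUnion_finset_le _ _) (Finset.sum_le_sum fun b _ => ?_)
            rw [Reg.vol_cube _ _ (by positivity), ← ENNReal.ofReal_mul (by positivity)]
            apply le_of_eq
            congr 1
            have := Reg.hρsq hr
            nlinarith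
        _ = (B.card : ℝ≥0∞) * ENNReal.ofReal (9 * r) := by
            rw [Finset.sum_const, nsmul_eq_mul]
    refine le_trans hvolE ?_
    rw [hvolEκ]
    have hKn7 : (Kn:ℝ) ≤ 7 + Real.log r := by
      by_cases hK0 : Kn = 0
      · rw [hK0]; push_cast; linarith
      · have hfl81 : 1 ≤ ⌊81 * Real.sqrt r⌋₊ := Nat.le_floor (by push_cast; nlinarith)
        have h2K : ((2:ℝ))^Kn ≤ 81 * Real.sqrt r := by
          calc ((2:ℝ))^Kn ≤ (⌊81 * Real.sqrt r⌋₊ : ℝ) := by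
                exact_mod_cast Nat.pow_log_le_self 2 (by omega)
            _ ≤ 81 * Real.sqrt r := Nat.floor_le (by positivity)
        have hlog1 : (Kn:ℝ) * Real.log 2 ≤ Real.log (81 * Real.sqrt r) := by
          rw [← Real.log_pow]
          exact Real.log_le_log (by positivity) h2K
        have hlog2 : Real.log (81 * Real.sqrt r) = Real.log 81 + Real.log r / 2 := by
          rw [Real.log_mul (by norm_num) (by positivity), Real.log_sqrt (le_of_lt hr0')]
        have hlog3 : Real.log 81 ≤ 7 * Real.log 2 := by
          calc Real.log 81 ≤ Real.log 128 := Real.log_le_log (by norm_num) (by norm_num)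
            _ = 7 * Real.log 2 := by
              rw [show (128:ℝ) = 2^7 by norm_num, Real.log_pow]
              push_cast
              ring
        have hl2 := Real.log_two_gt_d9
        nlinarith
    have hc1 : (B.card:ℝ) ≤ ((Kn:ℝ)+1) * (B'.card : ℝ) := by
      rw [hcardB']
      exact_mod_cast hpigk
    have hreal : (B.card:ℝ) * (9*r) ≤ (2000*(1+Real.log r)) * ((B'.card:ℝ) * r) := by
      have hB'0 : (0:ℝ) ≤ (B'.card:ℝ) := Nat.cast_nonneg _
      have e1 : (B.card:ℝ) * (9*r) ≤ (((Kn:ℝ)+1) * (B'.card:ℝ)) * (9*r) := by nlinarith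
      have e3 : 9*((Kn:ℝ)+1) ≤ 2000*(1+Real.log r) := by nlinarith
      have e2 : (((Kn:ℝ)+1) * (B'.card:ℝ)) * (9*r) ≤ (2000*(1+Real.log r)) * ((B'.card:ℝ) * r) := by
        calc (((Kn:ℝ)+1) * (B'.card:ℝ)) * (9*r) = (9*((Kn:ℝ)+1)) * ((B'.card:ℝ) * r) := by ring
          _ ≤ (2000*(1+Real.log r)) * ((B'.card:ℝ) * r) :=
              mul_le_mul_of_nonneg_right e3 (by positivity)
      linarith
    calc (B.card : ℝ≥0∞) * ENNReal.ofReal (9 * r)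
        = ENNReal.ofReal ((B.card:ℝ) * (9*r)) := by
          rw [← ENNReal.ofReal_natCast B.card, ← ENNReal.ofReal_mul (by positivity)]
      _ ≤ ENNReal.ofReal ((2000*(1+Real.log r)) * ((B'.card:ℝ) * r)) :=
          ENNReal.ofReal_le_ofReal hreal
      _ = ENNReal.ofReal (2000*(1+Real.log r)) * ((B'.card : ℝ≥0∞) * ENNReal.ofReal r) := by
          rw [← ENNReal.ofReal_natCast B'.card, ← ENNReal.ofReal_mul (by positivity),
            ← ENNReal.ofReal_mul (by positivity)]
  · -- tube regularity
    intro T hT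
    have hsel := Reg.select L hdom (2^(k+1)) Nat.one_le_two_pow T hT
    have himp : ∀ p : Finset (Fin 2 → ℝ) × Set Plane,
        (fun p => decide (lv p = k)) p = true →
        (fun p => decide (p.1.card < 2^(k+1))) p = true := by
      intro p hp
      have h1 : lv p = k := of_decide_eq_true hp
      have h2 : p.1.card < 2^(k+1) := by
        rw [← h1]
        exact Nat.lt_pow_succ_log_self one_lt_two _
      exact decide_eq_true h2
    have hsub : B' ⊆ Reg.U (L.filter (fun p => decide (p.1.card < 2^(k+1)))) :=
      Reg.U_filter_mono _ _ himp L
    have hnbr : (Reg.Nbr r T B').card ≤ 2^(k+1) :=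
      le_of_lt (lt_of_le_of_lt (Finset.card_le_card (Reg.nbr_mono hsub T)) hsel)
    refine le_trans (Reg.cond1_bound hr hnbr) ?_
    rw [Reg.vol_tube (Real.sqrt_nonneg r) (le_of_lt hr0') hT]
    have hcast : ((2^(k+1) : ℕ) : ℝ≥0∞) * ENNReal.ofReal (9*r)
        = ENNReal.ofReal (((2:ℝ)^(k+1)) * (9*r)) := by
      rw [← ENNReal.ofReal_natCast (2^(k+1)), ← ENNReal.ofReal_mul (by positivity)]
      congr 1
      push_cast
      ring
    rw [hcast]
    have hreal : ((2:ℝ)^(k+1)) * (9*r) ≤ (2000 * κ) * (Real.sqrt r * r) := by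
      have h1 : (2:ℝ)^(k+1) = 2 * (2:ℝ)^k := by rw [pow_succ]; ring
      have h2 := mul_le_mul_of_nonneg_right hF1 (by positivity : (0:ℝ) ≤ 18 * r)
      have h3 : (0:ℝ) ≤ κ * Real.sqrt r * r := by positivity
      nlinarith
    calc ENNReal.ofReal (((2:ℝ)^(k+1)) * (9*r))
        ≤ ENNReal.ofReal ((2000 * κ) * (Real.sqrt r * r)) := ENNReal.ofReal_le_ofReal hreal
      _ = ENNReal.ofReal (2000 * κ) * (ENNReal.ofReal (Real.sqrt r) * ENNReal.ofReal r) := by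
          rw [ENNReal.ofReal_mul (by positivity), ENNReal.ofReal_mul (Real.sqrt_nonneg r)]
  · -- covering by tubes
    have hLkprops : ∀ p ∈ Lk, IsTube (Real.sqrt r) r p.2 ∧ ∀ b ∈ p.1, Reg.near r p.2 b := by
      intro p hp
      have hpL : p ∈ L := (List.mem_filter.1 hp).1
      exact ⟨(hprops p hpL).2.1, (hprops p hpL).2.2⟩
    obtain ⟨𝕋, htub, htcard, htcov⟩ := Reg.cover_groups hr Lk hLkprops
    refine ⟨𝕋, htub, ?_, ?_⟩
    · intro x hx
      obtain ⟨b, hb, hxb⟩ := Set.mem_iUnion₂.1 hx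
      obtain ⟨p, hp, hbp⟩ := Reg.mem_U_exists hb
      exact htcov p hp b hbp hxb
    · have hNg : Lk.length * 2^k ≤ B'.card := by
        rw [hcardB', hMkdef]
        apply Reg.le_sum_of_forall_le
        intro p hp
        have hpL : p ∈ L := (List.mem_filter.1 hp).1
        have hlvp : lv p = k := of_decide_eq_true (List.mem_filter.1 hp).2
        have hne0 : p.1.card ≠ 0 := Finset.card_ne_zero_of_mem ((hprops p hpL).1.choose_spec)
        rw [← hlvp]
        exact Nat.pow_log_le_self 2 hne0
      have hr32 : r ^ ((3:ℝ)/2) = Real.sqrt r * r := by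
        rw [show (3:ℝ)/2 = 1/2 + 1 by norm_num, Real.rpow_add hr0', Real.rpow_one,
          ← Real.sqrt_eq_rpow]
      have hEκc₀ : (⋃ b ∈ B', Cube b (Real.sqrt r)) ⊆ Cube c₀ r :=
        Set.iUnion₂_subset fun b hb => hA b (hA'A hb)
      have hthicksub : Metric.thickening (Real.sqrt r) (⋃ b ∈ B', Cube b (Real.sqrt r)) ⊆
          Cube (fun i => c₀ i - Real.sqrt r) (r + 2 * Real.sqrt r) :=
        le_trans (Metric.thickening_subset_of_subset _ hEκc₀) (Reg.thick_cube_sub_gen hr c₀ r)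
      have hfin : volume (Metric.thickening (Real.sqrt r) (⋃ b ∈ B', Cube b (Real.sqrt r))) ≠ ⊤ := by
        refine ne_top_of_le_ne_top ?_ (measure_mono hthicksub)
        rw [Reg.vol_cube _ _ (by positivity)]
        exact (ENNReal.mul_lt_top ENNReal.ofReal_lt_top ENNReal.ofReal_lt_top).ne
      have hlow : (B'.card : ℝ) * r ≤
          (volume (Metric.thickening (Real.sqrt r) (⋃ b ∈ B', Cube b (Real.sqrt r)))).toReal := by
        have h1 : ENNReal.ofReal ((B'.card:ℝ) * r) ≤
            volume (Metric.thickening (Real.sqrt r) (⋃ b ∈ B', Cube b (Real.sqrt r))) := by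
          rw [ENNReal.ofReal_mul (by positivity), ENNReal.ofReal_natCast, ← hvolEκ]
          exact measure_mono (Metric.self_subset_thickening hρ0' _)
        calc (B'.card : ℝ) * r = (ENNReal.ofReal ((B'.card:ℝ) * r)).toReal :=
              (ENNReal.toReal_ofReal (by positivity)).symm
          _ ≤ _ := ENNReal.toReal_mono hfin h1
      have hTc : (𝕋.card : ℝ) ≤ 81 * (Lk.length : ℝ) := by exact_mod_cast htcard
      have hNg' : (Lk.length : ℝ) * (2:ℝ)^k ≤ (B'.card : ℝ) := by exact_mod_cast hNg
      have hstep : κ * Real.sqrt r * r ≤ (2:ℝ)^(k+1) * r := by nlinarith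
      calc (𝕋.card : ℝ) * (κ * r ^ ((3:ℝ)/2))
          = (𝕋.card : ℝ) * (κ * Real.sqrt r * r) := by rw [hr32]; ring
        _ ≤ (81 * (Lk.length : ℝ)) * ((2:ℝ)^(k+1) * r) := by
            apply mul_le_mul hTc hstep (by positivity) (by positivity)
        _ = 162 * (((Lk.length : ℝ) * (2:ℝ)^k) * r) := by rw [pow_succ]; ring
        _ ≤ 162 * ((B'.card : ℝ) * r) := by nlinarith
        _ ≤ 2000 * (volume (Metric.thickening (Real.sqrt r)
              (⋃ b ∈ B', Cube b (Real.sqrt r)))).toReal := by nlinarith
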